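/- Let d be a nonnegative integer and (f_n) a sequence of positive reals with f_n/n^d → 1. Let (ε_N) satisfy |ε_N| ≤ C/N for all N. Then N^{-(d+1)} ∑_{n=0}^{N-1} f_n (η+ε_N)^n → 0 as N → ∞, uniformly for η on compact subsets of the unit circle minus the point 1 and for C on compact subsets of [0,∞). -/

import Mathlib

/-!
Write `z = η + ε N` and `f n = n ^ d + g n` with `g n = o(n ^ d)`. For `n ≤ N` we have
`‖z‖ ^ n ≤ (1 + C / N) ^ N ≤ exp C`, and `‖z - 1‖ ≥ δ / 2` for large `N`, where `δ > 0` is the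
distance from `K` to `1`; hence the geometric partial sums of `z` are bounded by
`2 (exp C + 1) / δ`. Abel summation against the monotone weights `n ^ d` then makes
`∑ n ^ d z ^ n = O(N ^ d)`, while `‖∑ g n z ^ n‖ ≤ exp C ∑ |g n| = o(N ^ (d + 1))`.
All these bounds are uniform in `η ∈ K`.
-/

open Complex Filter Finset Asymptotics Topology

theorem IsCompact.exists_pos_forall_le_dist {α : Type*} [MetricSpace α] {K : Set α}
    {x : α} (hK : IsCompact K) (hx : x ∉ K) : ∃ δ > 0, ∀ y ∈ K, δ ≤ dist y x := by
  obtain ⟨r, hr, h⟩ := Metric.exists_pos_forall_lt_edist hK isClosed_singleton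
    (Set.disjoint_singleton_right.2 hx)
  refine ⟨r, hr, fun y hy => ?_⟩
  have := h y hy x rfl
  rw [edist_nndist, ENNReal.coe_lt_coe] at this
  exact_mod_cast this.le

theorem tendstoUniformlyOn_zero_of_norm_le {ι α E : Type*} [SeminormedAddGroup E]
    {F : ι → α → E} {l : Filter ι} {s : Set α} {u : ι → ℝ} (hu : Tendsto u l (𝓝 0))
    (h : ∀ᶠ i in l, ∀ x ∈ s, ‖F i x‖ ≤ u i) : TendstoUniformlyOn F (fun _ => 0) l s := by
  rw [Metric.tendstoUniformlyOn_iff]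
  intro r hr
  filter_upwards [h, hu.eventually (gt_mem_nhds hr)] with i hi hui x hx
  simpa [dist_eq_norm] using (hi x hx).trans_lt hui

theorem norm_sum_range_smul_le_of_monotone {E : Type*} [SeminormedAddCommGroup E]
    [NormedSpace ℝ E] {a : ℕ → ℝ} (ha : Monotone a) (ha₀ : 0 ≤ a 0) {g : ℕ → E} {B : ℝ}
    {N : ℕ} (hg : ∀ k ≤ N, ‖∑ j ∈ range k, g j‖ ≤ B) :
    ‖∑ n ∈ range N, a n • g n‖ ≤ 2 * a (N - 1) * B := by
  have hB : 0 ≤ B := by simpa using hg 0 N.zero_le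
  have haN : 0 ≤ a (N - 1) := ha₀.trans (ha (N - 1).zero_le)
  rw [sum_range_by_parts]
  have hlast : ‖a (N - 1) • ∑ j ∈ range N, g j‖ ≤ a (N - 1) * B := by
    rw [norm_smul, Real.norm_of_nonneg haN]
    exact mul_le_mul_of_nonneg_left (hg N le_rfl) haN
  have hbody : ‖∑ i ∈ range (N - 1), (a (i + 1) - a i) • ∑ j ∈ range (i + 1), g j‖
      ≤ a (N - 1) * B := by
    calc _ ≤ ∑ i ∈ range (N - 1), (a (i + 1) - a i) * B := by
          refine norm_sum_le_of_le _ fun i hi => ?_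
          have hinc : 0 ≤ a (i + 1) - a i := sub_nonneg.2 (ha i.le_succ)
          rw [norm_smul, Real.norm_of_nonneg hinc]
          exact mul_le_mul_of_nonneg_left (hg _ (by grind)) hinc
      _ = (a (N - 1) - a 0) * B := by rw [← sum_mul, sum_range_sub]
      _ ≤ a (N - 1) * B := by nlinarith
  linarith [norm_sub_le (a (N - 1) • ∑ j ∈ range N, g j)
    (∑ i ∈ range (N - 1), (a (i + 1) - a i) • ∑ j ∈ range (i + 1), g j)]

theorem norm_geom_sum_le {𝕜 : Type*} [NormedDivisionRing 𝕜] {z : 𝕜} (hz : z ≠ 1) (k : ℕ) :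
    ‖∑ j ∈ range k, z ^ j‖ ≤ (‖z‖ ^ k + 1) / ‖z - 1‖ := by
  rw [geom_sum_eq hz, norm_div, ← norm_pow]
  gcongr
  simpa using norm_sub_le (z ^ k) 1

theorem norm_add_pow_le_exp {E : Type*} [SeminormedRing E] [NormOneClass E] {x y : E}
    (hx : ‖x‖ ≤ 1) {C : ℝ} {n N : ℕ} (hy : N * ‖y‖ ≤ C) (hn : n ≤ N) :
    ‖x + y‖ ^ n ≤ Real.exp C := by
  calc ‖x + y‖ ^ n ≤ Real.exp ‖y‖ ^ n := by
        gcongr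
        calc ‖x + y‖ ≤ ‖y‖ + 1 := by linarith [norm_add_le x y]
          _ ≤ Real.exp ‖y‖ := Real.add_one_le_exp _
    _ = Real.exp (n * ‖y‖) := (Real.exp_nat_mul _ _).symm
    _ ≤ Real.exp C := by
        gcongr
        exact (mul_le_mul_of_nonneg_right (by exact_mod_cast hn) (norm_nonneg y)).trans hy

theorem Asymptotics.IsLittleO.sum_range_pow {E : Type*} [NormedAddCommGroup E] {g : ℕ → E}
    {d : ℕ} (h : g =o[atTop] fun n => (n : ℝ) ^ d) :
    (fun N => ∑ n ∈ range N, g n) =o[atTop] fun N => (N : ℝ) ^ (d + 1) := by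
  have h' : g =o[atTop] fun n => ((n : ℝ) + 1) ^ d :=
    h.trans_isBigO <| IsBigO.of_bound 1 <| Eventually.of_forall fun n => by
      simp only [norm_pow, Real.norm_natCast, one_mul]
      rw [Real.norm_of_nonneg (by positivity)]
      gcongr
      linarith
  have hsum : Tendsto (fun N => ∑ n ∈ range N, ((n : ℝ) + 1) ^ d) atTop atTop := by
    refine tendsto_atTop_mono (fun N => ?_) tendsto_natCast_atTop_atTop
    simpa using card_nsmul_le_sum (range N) (fun n => ((n : ℝ) + 1) ^ d) 1
      fun n _ => one_le_pow₀ (by linarith [n.cast_nonneg (α := ℝ)])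
  refine (h'.sum_range (fun n => by positivity) hsum).trans_isBigO <|
    IsBigO.of_bound 1 <| Eventually.of_forall fun N => ?_
  rw [Real.norm_of_nonneg (by positivity), Real.norm_of_nonneg (by positivity), one_mul,
    pow_succ']
  calc ∑ n ∈ range N, ((n : ℝ) + 1) ^ d ≤ ∑ n ∈ range N, (N : ℝ) ^ d := by
        gcongr with n hn
        exact_mod_cast mem_range.1 hn
    _ = N * (N : ℝ) ^ d := by simp

theorem norm_sum_mul_pow_le (f : ℕ → ℝ) (d : ℕ) {N : ℕ} {z : ℂ} {M δ : ℝ} (hδ : 0 < δ)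
    (hz : δ ≤ ‖z - 1‖) (hM : ∀ n ≤ N, ‖z‖ ^ n ≤ M) :
    ‖∑ n ∈ range N, (f n : ℂ) * z ^ n‖ ≤
      2 * ((M + 1) / δ) * (N : ℝ) ^ d + M * ∑ n ∈ range N, |f n - n ^ d| := by
  have hz₁ : z ≠ 1 := fun h => by simp [h] at hz; linarith
  have hM₀ : 1 ≤ M := by simpa using hM 0 N.zero_le
  have hpartial : ∀ k ≤ N, ‖∑ j ∈ range k, z ^ j‖ ≤ (M + 1) / δ := fun k hk =>
    (norm_geom_sum_le hz₁ k).trans <| by gcongr; linarith [hM k hk]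
  have hmain : ‖∑ n ∈ range N, ((n : ℝ) ^ d) • z ^ n‖ ≤ 2 * ((M + 1) / δ) * (N : ℝ) ^ d := by
    refine (norm_sum_range_smul_le_of_monotone (fun m n hmn => ?_) (by positivity)
      hpartial).trans ?_
    · gcongr
    · rw [mul_right_comm]
      gcongr
      exact_mod_cast N.sub_le 1
  have herr : ‖∑ n ∈ range N, ((f n - n ^ d : ℝ) : ℂ) * z ^ n‖ ≤
      M * ∑ n ∈ range N, |f n - n ^ d| := by
    rw [mul_sum]
    refine norm_sum_le_of_le _ fun n hn => ?_
    rw [norm_mul, norm_real, Real.norm_eq_abs, norm_pow, mul_comm]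
    gcongr
    exact hM n (mem_range.1 hn).le
  have hsplit : ∑ n ∈ range N, (f n : ℂ) * z ^ n =
      ∑ n ∈ range N, ((n : ℝ) ^ d) • z ^ n + ∑ n ∈ range N, ((f n - n ^ d : ℝ) : ℂ) * z ^ n := by
    rw [← sum_add_distrib]
    refine sum_congr rfl fun n _ => ?_
    rw [real_smul]
    push_cast
    ring
  rw [hsplit]
  exact (norm_add_le _ _).trans (add_le_add hmain herr)

theorem sum_tendsto_zero_uniformly (d : ℕ) (f : ℕ → ℝ)
    (hlim : Tendsto (fun n => f n / (n : ℝ) ^ d) atTop (nhds 1))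
    (C : ℝ) (ε : ℕ → ℂ) (hε : ∀ N : ℕ, ‖ε N‖ ≤ C / N)
    (K : Set ℂ) (hK : IsCompact K)
    (hK1 : K ⊆ {η : ℂ | ‖η‖ = 1 ∧ η ≠ 1}) :
    TendstoUniformlyOn
      (fun (N : ℕ) (η : ℂ) => (1 / (N : ℂ) ^ (d + 1)) *
        ∑ n ∈ Finset.range N, (f n : ℂ) * (η + ε N) ^ n)
      (fun _ => 0) atTop K := by
  obtain ⟨δ, hδ, hδK⟩ := hK.exists_pos_forall_le_dist (x := 1) fun h => (hK1 h).2 rfl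
  have herr : (fun n => |f n - n ^ d|) =o[atTop] fun n => (n : ℝ) ^ d :=
    (isEquivalent_of_tendsto_one hlim).isLittleO.norm_left
  set b : ℕ → ℝ := fun N =>
    2 * ((Real.exp C + 1) / (δ / 2)) * (N : ℝ) ^ d + Real.exp C * ∑ n ∈ range N, |f n - n ^ d|
  have hb : b =o[atTop] fun N => (N : ℝ) ^ (d + 1) :=
    (((isLittleO_pow_pow_atTop_of_lt d.lt_succ_self).comp_tendsto
      tendsto_natCast_atTop_atTop).const_mul_left _).add
      (herr.sum_range_pow.const_mul_left _)
  refine tendstoUniformlyOn_zero_of_norm_le hb.tendsto_div_nhds_zero ?_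
  filter_upwards [eventually_ge_atTop 1, (tendsto_const_div_atTop_nhds_zero_nat C).eventually
    (gt_mem_nhds (half_pos hδ))] with N hN hCN η hη
  have hεN : ‖ε N‖ ≤ δ / 2 := (hε N).trans hCN.le
  have hz : δ / 2 ≤ ‖η + ε N - 1‖ := by
    have hη₁ : δ ≤ ‖η - 1‖ := dist_eq_norm η 1 ▸ hδK η hη
    have := norm_sub_le (η - 1 + ε N) (ε N)
    rw [add_sub_cancel_right] at this
    rw [add_sub_right_comm]
    linarith
  have hNε : N * ‖ε N‖ ≤ C := (le_div_iff₀' (by exact_mod_cast hN)).1 (hε N)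
  have hpow : ∀ n ≤ N, ‖η + ε N‖ ^ n ≤ Real.exp C := fun n hn =>
    norm_add_pow_le_exp (hK1 hη).1.le hNε hn
  rw [norm_mul, norm_div, norm_one, norm_pow, Complex.norm_natCast, one_div_mul_eq_div]
  gcongr
  dsimp only [b]
  exact norm_sum_mul_pow_le f d (half_pos hδ) hz hpow
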